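/- arXiv:2406.11712 — 10 statements merged into one kernel-verified Lean document; each statement's English description precedes it below -/
import Mathlib

section
/- Let G be an n×n real matrix, λ a real number with I − λG invertible, C := (I − λG)⁻¹, ρ := rσ² ≥ 0, and M := Cᵀ(I − λ(G + Gᵀ))C + ρ·I. If M is positive definite, then the principal's reduced expected profit π(α) = αᵀCᵀ1 − ½ αᵀMα has a unique maximizer over ℝⁿ, given by α* = M⁻¹Cᵀ1, and moreover α* = (1/(1+ρ))·[I − (λ²/(1+ρ))·(GC)ᵀ(GC)]⁻¹ Cᵀ1 (the latter inverse existing). -/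
/-!
Expanding `(I − λG)ᵀ(I − λG) = I − λ(G + Gᵀ) + λ²GᵀG` and using `(I − λG)C = I` gives
`Cᵀ(I − λ(G + Gᵀ))C = I − λ²(GC)ᵀ(GC)`, hence `M = (1 + ρ)·[I − (λ²/(1 + ρ))(GC)ᵀ(GC)]`;
the second formula for `α*` is just `M⁻¹Cᵀ1` with this factorization inverted. The maximizer
is unique by completing the square: `π(α*) − π(α) = ½(α − α*)ᵀM(α − α*) > 0` for `α ≠ α*`.
-/

open Matrix

namespace Matrix

variable {ι R : Type*} [Fintype ι]

lemma IsSymm.dotProduct_mulVec_comm [CommSemiring R] {M : Matrix ι ι R} (hM : M.IsSymm)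
    (x y : ι → R) : x ⬝ᵥ M *ᵥ y = y ⬝ᵥ M *ᵥ x := by
  conv_lhs => rw [← hM.eq]
  exact dotProduct_transpose_mulVec M x y

lemma IsSymm.dotProduct_sub_half_dotProduct_mulVec_sub [Field R] [CharZero R]
    {M : Matrix ι ι R} (hM : M.IsSymm) {b x : ι → R} (hx : M *ᵥ x = b) (α : ι → R) :
    (x ⬝ᵥ b - 1 / 2 * (x ⬝ᵥ M *ᵥ x)) - (α ⬝ᵥ b - 1 / 2 * (α ⬝ᵥ M *ᵥ α)) =
      1 / 2 * ((α - x) ⬝ᵥ M *ᵥ (α - x)) := by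
  rw [← hx, mulVec_sub, dotProduct_sub, sub_dotProduct, sub_dotProduct,
    hM.dotProduct_mulVec_comm x α]
  ring

theorem PosDef.dotProduct_sub_half_dotProduct_mulVec_lt [DecidableEq ι] {M : Matrix ι ι ℝ}
    (hM : M.PosDef) (b : ι → ℝ) {α : ι → ℝ} (hα : α ≠ M⁻¹ *ᵥ b) :
    α ⬝ᵥ b - 1 / 2 * (α ⬝ᵥ M *ᵥ α) <
      (M⁻¹ *ᵥ b) ⬝ᵥ b - 1 / 2 * ((M⁻¹ *ᵥ b) ⬝ᵥ M *ᵥ (M⁻¹ *ᵥ b)) := by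
  have hcrit : M *ᵥ (M⁻¹ *ᵥ b) = b := by
    rw [mulVec_mulVec, mul_nonsing_inv _ ((isUnit_iff_isUnit_det M).mp hM.isUnit), one_mulVec]
  have hgap := (isHermitian_iff_isSymm.mp hM.isHermitian).dotProduct_sub_half_dotProduct_mulVec_sub
    hcrit α
  have hpos : 0 < (α - M⁻¹ *ᵥ b) ⬝ᵥ M *ᵥ (α - M⁻¹ *ᵥ b) :=
    hM.dotProduct_mulVec_pos (sub_ne_zero.mpr hα)
  linarith

lemma transpose_mul_one_sub_smul_add_transpose_mul [CommRing R] [DecidableEq ι]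
    {G C : Matrix ι ι R} {lam : R} (hC : (1 - lam • G) * C = 1) :
    Cᵀ * (1 - lam • (G + Gᵀ)) * C = 1 - lam ^ 2 • ((G * C)ᵀ * (G * C)) := by
  have hsplit : (1 : Matrix ι ι R) - lam • (G + Gᵀ) =
      (1 - lam • G)ᵀ * (1 - lam • G) - lam ^ 2 • (Gᵀ * G) := by
    simp only [transpose_sub, transpose_one, transpose_smul, sub_mul, mul_sub, one_mul, mul_one,
      smul_mul_smul_comm, smul_add, sq]
    abel
  calc Cᵀ * (1 - lam • (G + Gᵀ)) * C
      = ((1 - lam • G) * C)ᵀ * ((1 - lam • G) * C) - lam ^ 2 • ((G * C)ᵀ * (G * C)) := by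
        rw [hsplit, transpose_mul, transpose_mul]
        simp only [sub_mul, mul_sub, Matrix.mul_smul, Matrix.smul_mul, Matrix.mul_assoc]
    _ = 1 - lam ^ 2 • ((G * C)ᵀ * (G * C)) := by rw [hC, transpose_one, one_mul]

end Matrix

/-- If `M = Cᵀ(I − λ(G+Gᵀ))C + ρI` is positive definite, the reduced
profit `π(α) = αᵀCᵀ1 − ½αᵀMα` has the unique maximizer `α* = M⁻¹Cᵀ1`, which moreover
equals `(1/(1+ρ))[I − (λ²/(1+ρ))(GC)ᵀ(GC)]⁻¹Cᵀ1`, that inverse existing. -/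
theorem stmt_2 (n : ℕ) (G : Matrix (Fin n) (Fin n) ℝ) (lam ρ : ℝ) (hρ : 0 ≤ ρ)
    (hinv : IsUnit ((1 : Matrix (Fin n) (Fin n) ℝ) - lam • G)) :
    let C := ((1 : Matrix (Fin n) (Fin n) ℝ) - lam • G)⁻¹
    let M := Cᵀ * ((1 : Matrix (Fin n) (Fin n) ℝ) - lam • (G + Gᵀ)) * C +
      ρ • (1 : Matrix (Fin n) (Fin n) ℝ)
    let one : Fin n → ℝ := fun _ => 1
    let αstar := M⁻¹.mulVec (Cᵀ.mulVec one)
    M.PosDef →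
    (∀ α : Fin n → ℝ, α ≠ αstar →
        α ⬝ᵥ Cᵀ.mulVec one - (1 / 2) * (α ⬝ᵥ M.mulVec α) <
          αstar ⬝ᵥ Cᵀ.mulVec one - (1 / 2) * (αstar ⬝ᵥ M.mulVec αstar)) ∧
      IsUnit ((1 : Matrix (Fin n) (Fin n) ℝ) - (lam ^ 2 / (1 + ρ)) • ((G * C)ᵀ * (G * C))) ∧
      αstar = (1 / (1 + ρ)) •
        (((1 : Matrix (Fin n) (Fin n) ℝ) -
            (lam ^ 2 / (1 + ρ)) • ((G * C)ᵀ * (G * C)))⁻¹.mulVec (Cᵀ.mulVec one)) := by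
  intro C M one αstar hM
  set N : Matrix (Fin n) (Fin n) ℝ := 1 - (lam ^ 2 / (1 + ρ)) • ((G * C)ᵀ * (G * C))
  have hρ1 : 1 + ρ ≠ 0 := by positivity
  set u : ℝˣ := Units.mk0 (1 + ρ) hρ1
  have hC : (1 - lam • G) * C = 1 := mul_nonsing_inv _ ((isUnit_iff_isUnit_det _).mp hinv)
  have hMN : M = u • N := by
    simp only [M, transpose_mul_one_sub_smul_add_transpose_mul hC, N, u, Units.smul_mk0, smul_sub,
      smul_smul, mul_div_cancel₀ _ hρ1, add_smul, one_smul]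
    abel
  have hN : IsUnit N := (isUnit_smul_iff u N).mp (hMN ▸ hM.isUnit)
  refine ⟨fun α hα => hM.dotProduct_sub_half_dotProduct_mulVec_lt _ hα, hN, ?_⟩
  rw [show αstar = M⁻¹ *ᵥ (Cᵀ *ᵥ one) from rfl, hMN, inv_smul' N u ((isUnit_iff_isUnit_det N).mp hN),
    Units.smul_def, smul_mulVec, Units.val_inv_eq_inv_val, Units.val_mk0, one_div]
end

section
/- Let G be a symmetric n×n real matrix with eigenvalues μ₁ ≥ … ≥ μₙ, λ ≥ 0, ρ := rσ² ≥ 0, and set s := 1 + ρ. If λμ₁ < √s/(√s + 1), then I − λG is invertible and the matrix M := C(I − 2λG)C + ρ·I, with C := (I − λG)⁻¹, is positive definite. -/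
/-!
Everything in sight is a function of the symmetric matrix `G`: with `t = λμ` for an eigenvalue
`μ`, the matrix `M` has eigenvalue `(1 - 2t) / (1 - t)² + ρ`. Writing `a = √(1 + ρ)`, so that
`ρ = a² - 1`, the numerator `1 - 2t + ρ(1 - t)²` factors as `(a(1 - t) - t)(a(1 - t) + t)`, and
the bound `t < a / (a + 1)` is exactly the positivity of the first factor.
-/

open Matrix

open scoped MatrixOrder ComplexOrder

theorem one_sub_pos_of_lt_sqrt_div {ρ t : ℝ} (ht : t < √(1 + ρ) / (√(1 + ρ) + 1)) :
    0 < 1 - t := by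
  have hdiv : √(1 + ρ) / (√(1 + ρ) + 1) < 1 :=
    (div_lt_one (by positivity)).mpr (lt_add_one _)
  linarith

theorem one_sub_two_mul_add_mul_sq_pos {ρ t : ℝ} (hρ : 0 ≤ ρ)
    (ht : t < √(1 + ρ) / (√(1 + ρ) + 1)) : 0 < 1 - 2 * t + ρ * (1 - t) ^ 2 := by
  set a := √(1 + ρ)
  have ha : a ^ 2 = 1 + ρ := Real.sq_sqrt (by linarith)
  have ha1 : 1 ≤ a := Real.one_le_sqrt.mpr (by linarith)
  have h1 : 0 < a * (1 - t) - t := by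
    have := (lt_div_iff₀ (by positivity)).mp ht
    linarith
  have h2 : 0 < (a - 1) * (1 - t) + 1 := by
    have := one_sub_pos_of_lt_sqrt_div ht
    positivity
  have hfactor :
      1 - 2 * t + ρ * (1 - t) ^ 2 = (a * (1 - t) - t) * ((a - 1) * (1 - t) + 1) := by
    rw [show ρ = a ^ 2 - 1 by linarith]
    ring
  rw [hfactor]
  exact mul_pos h1 h2

theorem inv_mul_one_sub_two_mul_mul_inv_add_pos {ρ t : ℝ} (hρ : 0 ≤ ρ)
    (ht : t < √(1 + ρ) / (√(1 + ρ) + 1)) :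
    0 < (1 - t)⁻¹ * (1 - 2 * t) * (1 - t)⁻¹ + ρ := by
  have h1 := one_sub_pos_of_lt_sqrt_div ht
  have h2 := one_sub_two_mul_add_mul_sq_pos hρ ht
  have hquot : (1 - t)⁻¹ * (1 - 2 * t) * (1 - t)⁻¹ + ρ
      = (1 - 2 * t + ρ * (1 - t) ^ 2) / (1 - t) ^ 2 := by
    field_simp
  rw [hquot]
  positivity

theorem one_sub_smul_eq_cfc {A : Type*} [Ring A] [StarRing A] [TopologicalSpace A] [Algebra ℝ A]
    [ContinuousFunctionalCalculus ℝ A IsSelfAdjoint] {a : A} (ha : IsSelfAdjoint a) (c : ℝ) :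
    1 - c • a = cfc (fun x => 1 - c * x) a := by
  rw [cfc_sub .., cfc_const_one .., cfc_const_mul .., cfc_id' ..]

namespace Matrix

variable {𝕜 n : Type*} [RCLike 𝕜] [Fintype n] [DecidableEq n]

theorem nonsing_inv_cfc {A : Matrix n n 𝕜} (hA : A.IsHermitian) (f : ℝ → ℝ)
    (hf : ∀ x ∈ spectrum ℝ A, f x ≠ 0) :
    (cfc f A)⁻¹ = cfc (fun x => (f x)⁻¹) A := by
  rw [nonsing_inv_eq_ringInverse,
    cfc_inv f A hf (A.finite_real_spectrum.continuousOn f) hA.isSelfAdjoint]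

theorem posDef_cfc_iff {A : Matrix n n 𝕜} (hA : A.IsHermitian) (f : ℝ → ℝ) :
    (cfc f A).PosDef ↔ ∀ x ∈ spectrum ℝ A, 0 < f x := by
  rw [← isStrictlyPositive_iff_posDef,
    cfc_isStrictlyPositive_iff f A (A.finite_real_spectrum.continuousOn f) hA.isSelfAdjoint]

end Matrix

theorem stmt_3_general (n : ℕ) (G : Matrix (Fin n) (Fin n) ℝ) (lam ρ : ℝ)
    (hG : G.IsSymm) (hρ : 0 ≤ ρ)
    (heig : ∀ μ ∈ spectrum ℝ G,
      lam * μ < Real.sqrt (1 + ρ) / (Real.sqrt (1 + ρ) + 1)) :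
    IsUnit ((1 : Matrix (Fin n) (Fin n) ℝ) - lam • G) ∧
      (((1 : Matrix (Fin n) (Fin n) ℝ) - lam • G)⁻¹ *
          ((1 : Matrix (Fin n) (Fin n) ℝ) - (2 * lam) • G) *
          ((1 : Matrix (Fin n) (Fin n) ℝ) - lam • G)⁻¹ +
          ρ • (1 : Matrix (Fin n) (Fin n) ℝ)).PosDef := by
  have hG' : G.IsHermitian := isHermitian_iff_isSymm.mpr hG
  have hcont (f : ℝ → ℝ) : ContinuousOn f (spectrum ℝ G) := G.finite_real_spectrum.continuousOn f
  have hpos : ∀ μ ∈ spectrum ℝ G, 0 < 1 - lam * μ :=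
    fun μ hμ => one_sub_pos_of_lt_sqrt_div (heig μ hμ)
  rw [one_sub_smul_eq_cfc hG'.isSelfAdjoint, one_sub_smul_eq_cfc hG'.isSelfAdjoint,
    nonsing_inv_cfc hG' _ fun μ hμ => (hpos μ hμ).ne']
  refine ⟨isUnit_cfc _ _ (hcont _) hG'.isSelfAdjoint fun μ hμ => (hpos μ hμ).ne', ?_⟩
  rw [← cfc_mul _ _ G (hcont _) (hcont _), ← cfc_mul _ _ G (hcont _) (hcont _), Algebra.smul_def,
    mul_one, ← cfc_add_const _ _ G (hcont _), posDef_cfc_iff hG']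
  intro μ hμ
  simpa only [mul_assoc] using inv_mul_one_sub_two_mul_mul_inv_add_pos hρ (heig μ hμ)

/-- For symmetric `G` with all eigenvalues `μ` satisfying
`λμ < √s/(√s+1)` (in particular the largest one, which suffices since `λ ≥ 0`),
`I − λG` is invertible and `M = C(I − 2λG)C + ρI` is positive definite. -/
theorem stmt_3 (n : ℕ) (G : Matrix (Fin n) (Fin n) ℝ) (lam ρ : ℝ)
    (hG : G.IsSymm) (hlam : 0 ≤ lam) (hρ : 0 ≤ ρ)
    (heig : ∀ μ ∈ spectrum ℝ G,
      lam * μ < Real.sqrt (1 + ρ) / (Real.sqrt (1 + ρ) + 1)) :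
    IsUnit ((1 : Matrix (Fin n) (Fin n) ℝ) - lam • G) ∧
      (((1 : Matrix (Fin n) (Fin n) ℝ) - lam • G)⁻¹ *
          ((1 : Matrix (Fin n) (Fin n) ℝ) - (2 * lam) • G) *
          ((1 : Matrix (Fin n) (Fin n) ℝ) - lam • G)⁻¹ +
          ρ • (1 : Matrix (Fin n) (Fin n) ℝ)).PosDef :=
  stmt_3_general n G lam ρ hG hρ heig
end

section
/- Let G be a symmetric n×n real matrix with largest eigenvalue μ₁, λ ≥ 0, ρ := rσ² > 0, and s := 1 + ρ. If λμ₁ < √s/(√s + 1), then I − λG is invertible, the matrix (λ²/s)·(GC)ᵀ(GC) with C := (I − λG)⁻¹ has spectral radius strictly less than 1, the matrix I − (λ²/s)(GC)ᵀ(GC) is invertible, and its inverse W equals the convergent series W = Σ_{k=0}^∞ (λ²/s)ᵏ ((GC)ᵀ(GC))ᵏ. -/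
/-!
Every matrix in sight is a function of the symmetric matrix `G`: `C = f(G)` with
`f(x) = (1 - λx)⁻¹`, and since `GC` is symmetric, `M := (λ²/s)(GC)ᵀ(GC) = t(G)` with
`t(x) = (λ²/s)(x/(1 - λx))²`. By spectral mapping the spectrum of `M` is `t(σ(G))`, and the
bound `λμ < √s/(√s + 1)` is exactly `|λμ| < √s(1 - λμ)`, i.e. `0 ≤ t(μ) < 1`. In an eigenbasis
of `G` the geometric series of `M` is then a diagonal of scalar geometric series.
-/

open Matrix

theorem spectralRadius_lt_of_forall_lt_of_finite {𝕜 A : Type*} [NormedField 𝕜] [Ring A]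
    [Algebra 𝕜 A] {a : A} (hfin : (spectrum 𝕜 a).Finite) {r : NNReal} (hr : 0 < r)
    (h : ∀ k ∈ spectrum 𝕜 a, ‖k‖₊ < r) : spectralRadius 𝕜 a < r := by
  rw [spectralRadius, ← hfin.coe_toFinset]
  simp_rw [Finset.mem_coe]
  rw [← Finset.sup_eq_iSup, Finset.sup_lt_iff (by simpa using hr)]
  exact fun k hk => ENNReal.coe_lt_coe.mpr (h k (hfin.mem_toFinset.mp hk))

section
variable {ι 𝕜 : Type*} [RCLike 𝕜] [Fintype ι] [DecidableEq ι]

theorem Matrix.IsHermitian.hasSum_cfc {A : Matrix ι ι 𝕜} (hA : A.IsHermitian) {f : ℕ → ℝ → ℝ}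
    {g : ℝ → ℝ} (h : ∀ x ∈ spectrum ℝ A, HasSum (fun k => f k x) (g x)) :
    HasSum (fun k => cfc (f k) A) (cfc g A) := by
  simp only [hA.cfc_eq, IsHermitian.cfc]
  have hdiag : HasSum (fun k i => (f k (hA.eigenvalues i) : 𝕜))
      fun i => (g (hA.eigenvalues i) : 𝕜) :=
    Pi.hasSum.mpr fun i =>
      (RCLike.hasSum_ofReal 𝕜).mpr (h _ (hA.eigenvalues_mem_spectrum_real i))
  exact (hdiag.matrix_diagonal.mul_left _).mul_right _

theorem Matrix.IsHermitian.cfc_geom_series_of_abs_lt_one {A : Matrix ι ι 𝕜} (hA : A.IsHermitian)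
    {f : ℝ → ℝ} (hf : ∀ x ∈ spectrum ℝ A, |f x| < 1) :
    spectralRadius ℝ (cfc f A) < 1 ∧ IsUnit (1 - cfc f A) ∧
      HasSum (fun k => cfc f A ^ k) (1 - cfc f A)⁻¹ := by
  have hsa : IsSelfAdjoint A := hA
  have hcont (g : ℝ → ℝ) : ContinuousOn g (spectrum ℝ A) := finite_real_spectrum.continuousOn g
  have hsub : 1 - cfc f A = cfc (fun x => 1 - f x) A := by
    rw [cfc_sub (fun _ => 1) f A (hf := hcont _) (hg := hcont _), cfc_const_one ℝ A]
  have hne : ∀ x ∈ spectrum ℝ A, 1 - f x ≠ 0 := fun x hx =>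
    sub_ne_zero.mpr fun h => by simpa [← h] using hf x hx
  refine ⟨?_, ?_, ?_⟩
  · refine spectralRadius_lt_of_forall_lt_of_finite finite_real_spectrum one_pos ?_
    rw [cfc_map_spectrum f A (hf := hcont f)]
    rintro - ⟨x, hx, rfl⟩
    exact_mod_cast hf x hx
  · rw [hsub, isUnit_cfc_iff _ _ (hf := hcont _)]
    exact hne
  · rw [hsub, nonsing_inv_eq_ringInverse, ← cfc_inv _ _ hne (hf := hcont _)]
    simp_rw [← cfc_pow f _ A (hf := hcont f)]
    exact hA.hasSum_cfc fun x hx => hasSum_geometric_of_abs_lt_one (hf x hx)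
end

theorem sq_lt_mul_one_sub_sq {s y : ℝ} (hs : 1 ≤ s) (hy : y < √s / (√s + 1)) :
    0 < 1 - y ∧ y ^ 2 < s * (1 - y) ^ 2 := by
  have hq : 1 ≤ √s := Real.one_le_sqrt.mpr hs
  rw [lt_div_iff₀ (by positivity)] at hy
  have hy1 : y < 1 := by nlinarith
  have habs : |y| < √s * (1 - y) := abs_lt.mpr ⟨by nlinarith, by nlinarith⟩
  refine ⟨by linarith, ?_⟩
  calc y ^ 2 = |y| ^ 2 := (sq_abs y).symm
    _ < (√s * (1 - y)) ^ 2 := by gcongr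
    _ = s * (1 - y) ^ 2 := by rw [mul_pow, Real.sq_sqrt (by linarith)]

theorem abs_mul_sq_div_one_sub_lt_one {s lam x : ℝ} (hs : 1 ≤ s)
    (h : lam * x < √s / (√s + 1)) :
    0 < 1 - lam * x ∧ |lam ^ 2 / s * (x * (1 - lam * x)⁻¹) ^ 2| < 1 := by
  obtain ⟨hpos, hsq⟩ := sq_lt_mul_one_sub_sq hs h
  refine ⟨hpos, ?_⟩
  have : lam ^ 2 / s * (x * (1 - lam * x)⁻¹) ^ 2 = (lam * x) ^ 2 / (s * (1 - lam * x) ^ 2) := by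
    field_simp
  rw [this, abs_of_nonneg (by positivity), div_lt_one (by positivity)]
  exact hsq

theorem Matrix.transpose_cfc {ι : Type*} [Fintype ι] [DecidableEq ι] (f : ℝ → ℝ)
    (A : Matrix ι ι ℝ) : (cfc f A)ᵀ = cfc f A := by
  simpa [star_eq_conjTranspose] using (cfc_predicate f A).star_eq

theorem stmt_4_general (n : ℕ) (G : Matrix (Fin n) (Fin n) ℝ) (lam ρ : ℝ)
    (hG : G.IsSymm) (hρ : 0 < ρ)
    (heig : ∀ μ ∈ spectrum ℝ G,
      lam * μ < Real.sqrt (1 + ρ) / (Real.sqrt (1 + ρ) + 1)) :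
    let C := ((1 : Matrix (Fin n) (Fin n) ℝ) - lam • G)⁻¹
    IsUnit ((1 : Matrix (Fin n) (Fin n) ℝ) - lam • G) ∧
      spectralRadius ℝ ((lam ^ 2 / (1 + ρ)) • ((G * C)ᵀ * (G * C))) < 1 ∧
      IsUnit ((1 : Matrix (Fin n) (Fin n) ℝ) - (lam ^ 2 / (1 + ρ)) • ((G * C)ᵀ * (G * C))) ∧
      HasSum (fun k : ℕ => ((lam ^ 2 / (1 + ρ)) • ((G * C)ᵀ * (G * C))) ^ k)
        (((1 : Matrix (Fin n) (Fin n) ℝ) - (lam ^ 2 / (1 + ρ)) • ((G * C)ᵀ * (G * C)))⁻¹) := by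
  intro C
  have hH : G.IsHermitian := isHermitian_iff_isSymm.mpr hG
  have hsa : IsSelfAdjoint G := hH
  have hcont (f : ℝ → ℝ) : ContinuousOn f (spectrum ℝ G) := finite_real_spectrum.continuousOn f
  have hbound (μ) (hμ : μ ∈ spectrum ℝ G) :=
    abs_mul_sq_div_one_sub_lt_one (by linarith) (heig μ hμ)
  have hOneSub : 1 - lam • G = cfc (fun x => 1 - lam * x) G := by
    rw [cfc_sub _ _ G (hf := hcont _) (hg := hcont _), cfc_const_one ℝ G,
      cfc_const_mul_id lam G]
  have hC : C = cfc (fun x => (1 - lam * x)⁻¹) G := by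
    rw [cfc_inv _ G (fun μ hμ => (hbound μ hμ).1.ne') (hf := hcont _), ← hOneSub,
      ← nonsing_inv_eq_ringInverse]
  have hGC : G * C = cfc (fun x => x * (1 - lam * x)⁻¹) G := by
    rw [hC, cfc_mul _ _ G (hf := hcont _) (hg := hcont _), cfc_id' ℝ G]
  have hM : (lam ^ 2 / (1 + ρ)) • ((G * C)ᵀ * (G * C)) =
      cfc (fun x => lam ^ 2 / (1 + ρ) * (x * (1 - lam * x)⁻¹) ^ 2) G := by
    rw [hGC, transpose_cfc, ← sq, ← cfc_pow _ 2 G (hf := hcont _),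
      ← cfc_const_mul _ _ G (hf := hcont _)]
  refine ⟨?_, hM ▸ hH.cfc_geom_series_of_abs_lt_one fun μ hμ => (hbound μ hμ).2⟩
  rw [hOneSub, isUnit_cfc_iff _ G (hf := hcont _)]
  exact fun μ hμ => (hbound μ hμ).1.ne'

/-- Under the spectral bound, `I − λG` is invertible, the matrix
`(λ²/s)(GC)ᵀ(GC)` has spectral radius `< 1`, `I − (λ²/s)(GC)ᵀ(GC)` is invertible,
and its inverse is the sum of the convergent geometric series. -/
theorem stmt_4 (n : ℕ) (G : Matrix (Fin n) (Fin n) ℝ) (lam ρ : ℝ)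
    (hG : G.IsSymm) (hlam : 0 ≤ lam) (hρ : 0 < ρ)
    (heig : ∀ μ ∈ spectrum ℝ G,
      lam * μ < Real.sqrt (1 + ρ) / (Real.sqrt (1 + ρ) + 1)) :
    let C := ((1 : Matrix (Fin n) (Fin n) ℝ) - lam • G)⁻¹
    IsUnit ((1 : Matrix (Fin n) (Fin n) ℝ) - lam • G) ∧
      spectralRadius ℝ ((lam ^ 2 / (1 + ρ)) • ((G * C)ᵀ * (G * C))) < 1 ∧
      IsUnit ((1 : Matrix (Fin n) (Fin n) ℝ) - (lam ^ 2 / (1 + ρ)) • ((G * C)ᵀ * (G * C))) ∧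
      HasSum (fun k : ℕ => ((lam ^ 2 / (1 + ρ)) • ((G * C)ᵀ * (G * C))) ^ k)
        (((1 : Matrix (Fin n) (Fin n) ℝ) - (lam ^ 2 / (1 + ρ)) • ((G * C)ᵀ * (G * C)))⁻¹) :=
  stmt_4_general n G lam ρ hG hρ heig
end

section
/- Let G be a symmetric n×n real matrix and λ a real number such that I − λG and I − 2λG are both invertible, and set C := (I − λG)⁻¹. If M := C(I − 2λG)C is invertible then the risk-free optimal incentive vector α* = M⁻¹C1 satisfies α* = ½(1 + (I − 2λG)⁻¹1); equivalently, αᵢ* = ½(1 + Bᵢ(2λ)) where Bᵢ(2λ) is worker i's Bonacich centrality with parameter 2λ. -/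
/-!
Since `M = C (I − 2λG) C` with `C = (I − λG)⁻¹`, we get `M⁻¹ C = (I − λG)(I − 2λG)⁻¹`,
and `I − λG = ½((I − 2λG) + I)` turns this into `½(I + (I − 2λG)⁻¹)`.
-/

open Matrix

namespace Matrix

variable {n : Type*} [Fintype n] [DecidableEq n]

theorem inv_mul_mul_inv_inv_mul_inv {R : Type*} [CommRing R] {A : Matrix n n R}
    (hA : IsUnit A) (B : Matrix n n R) :
    (A⁻¹ * B * A⁻¹)⁻¹ * A⁻¹ = A * B⁻¹ := by
  have hAdet : IsUnit A.det := (isUnit_iff_isUnit_det A).mp hA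
  rw [mul_inv_rev, mul_inv_rev, nonsing_inv_nonsing_inv A hAdet, mul_assoc,
    mul_assoc, mul_nonsing_inv A hAdet, mul_one]

theorem one_sub_smul_mul_inv_one_sub_two_mul_smul {K : Type*} [Field K] [NeZero (2 : K)]
    (G : Matrix n n K) (c : K) (h : IsUnit (1 - (2 * c) • G)) :
    (1 - c • G) * (1 - (2 * c) • G)⁻¹ = (2⁻¹ : K) • (1 + (1 - (2 * c) • G)⁻¹) := by
  have halve : 1 - c • G = (2⁻¹ : K) • ((1 - (2 * c) • G) + 1) := by
    match_scalars <;> field_simp; ring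
  rw [halve, smul_mul_assoc, add_mul, one_mul,
    mul_nonsing_inv _ ((isUnit_iff_isUnit_det _).mp h)]

end Matrix

theorem stmt_6_general (n : ℕ) (G : Matrix (Fin n) (Fin n) ℝ) (lam : ℝ)
    (hinv : IsUnit ((1 : Matrix (Fin n) (Fin n) ℝ) - lam • G))
    (hinv2 : IsUnit ((1 : Matrix (Fin n) (Fin n) ℝ) - (2 * lam) • G)) :
    let C := ((1 : Matrix (Fin n) (Fin n) ℝ) - lam • G)⁻¹
    let M := C * ((1 : Matrix (Fin n) (Fin n) ℝ) - (2 * lam) • G) * C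
    let one : Fin n → ℝ := fun _ => 1
    IsUnit M →
    M⁻¹.mulVec (C.mulVec one) =
      fun i => (1 / 2) * (1 + ((1 : Matrix (Fin n) (Fin n) ℝ) -
        (2 * lam) • G)⁻¹.mulVec one i) := by
  intro C M one _
  rw [mulVec_mulVec, inv_mul_mul_inv_inv_mul_inv hinv,
    one_sub_smul_mul_inv_one_sub_two_mul_smul G lam hinv2]
  ext i
  simp [smul_mulVec, add_mulVec, one, mul_add]

/-- With no risk the optimal incentives are
`α* = [C(I − 2λG)C]⁻¹C1 = ½(1 + (I − 2λG)⁻¹1)`, i.e. an affine transformation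
of Bonacich centrality with parameter `2λ`. -/
theorem stmt_6 (n : ℕ) (G : Matrix (Fin n) (Fin n) ℝ) (lam : ℝ)
    (hG : G.IsSymm)
    (hinv : IsUnit ((1 : Matrix (Fin n) (Fin n) ℝ) - lam • G))
    (hinv2 : IsUnit ((1 : Matrix (Fin n) (Fin n) ℝ) - (2 * lam) • G)) :
    let C := ((1 : Matrix (Fin n) (Fin n) ℝ) - lam • G)⁻¹
    let M := C * ((1 : Matrix (Fin n) (Fin n) ℝ) - (2 * lam) • G) * C
    let one : Fin n → ℝ := fun _ => 1
    IsUnit M →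
    M⁻¹.mulVec (C.mulVec one) =
      fun i => (1 / 2) * (1 + ((1 : Matrix (Fin n) (Fin n) ℝ) -
        (2 * lam) • G)⁻¹.mulVec one i) :=
  stmt_6_general n G lam hinv hinv2
end

section
/- Let G be an n×n real matrix and λ a real number with I − λG invertible, C := (I − λG)⁻¹, and suppose that for all sufficiently large ρ > 0 the matrix (1+ρ)I − λ²(GC)ᵀ(GC) is invertible (which holds for ρ large). Define α*(ρ) := [(1+ρ)I − λ²(GC)ᵀ(GC)]⁻¹Cᵀ1. Then lim_{ρ→∞} (1+ρ)·α*(ρ) = Cᵀ1; in particular α*(ρ) → 0 and the direction of α*(ρ) converges to that of the Bonacich-centrality vector Cᵀ1. -/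
/-!
With `M = λ²(GC)ᵀ(GC)`, one has `(1+ρ)·[(1+ρ)I − M]⁻¹ = (I − M/(1+ρ))⁻¹`, which tends to
`I⁻¹ = I` by continuity of matrix inversion at `I`. Hence `(1+ρ)·α*(ρ) → Cᵀ1`, and dividing by
`1 + ρ → ∞` gives `α*(ρ) → 0`.
-/

open Matrix Filter Topology

namespace Matrix

variable {ι K : Type*} [Fintype ι] [DecidableEq ι] [Field K]

/-- For singular `A`, both sides are the junk value `0`. -/
theorem inv_smul_of_ne_zero (A : Matrix ι ι K) {k : K} (hk : k ≠ 0) :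
    (k • A)⁻¹ = k⁻¹ • A⁻¹ := by
  by_cases hA : IsUnit A.det
  · simpa [Units.smul_def] using inv_smul' A (Units.mk0 k hk) hA
  · have hkA : ¬IsUnit (k • A).det := by
      rw [isUnit_iff_ne_zero, not_not] at hA
      simp [hA]
    rw [nonsing_inv_apply_not_isUnit _ hA, nonsing_inv_apply_not_isUnit _ hkA, smul_zero]

theorem smul_inv_smul_one_sub (M : Matrix ι ι K) {t : K} (ht : t ≠ 0) :
    t • (t • 1 - M)⁻¹ = (1 - t⁻¹ • M)⁻¹ := by
  have hfactor : 1 - t⁻¹ • M = t⁻¹ • (t • 1 - M) := by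
    rw [smul_sub, smul_smul, inv_mul_cancel₀ ht, one_smul]
  rw [hfactor, inv_smul_of_ne_zero _ (inv_ne_zero ht), inv_inv]

theorem continuousAt_inv_one [TopologicalSpace K] [IsTopologicalRing K] [ContinuousInv₀ K] :
    ContinuousAt Inv.inv (1 : Matrix ι ι K) := by
  refine continuousAt_matrix_inv _ ?_
  rw [det_one]
  exact (continuousAt_inv₀ one_ne_zero).congr
    (Eventually.of_forall fun x => (Ring.inverse_eq_inv x).symm)

theorem tendsto_smul_inv_smul_one_sub_atTop (M : Matrix ι ι ℝ) :
    Tendsto (fun t : ℝ => t • (t • 1 - M)⁻¹) atTop (𝓝 1) := by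
  have hlin : Tendsto (fun t : ℝ => 1 - t⁻¹ • M) atTop (𝓝 1) := by
    simpa using tendsto_const_nhds.sub ((tendsto_inv_atTop_zero (𝕜 := ℝ)).smul_const M)
  have hinv := (continuousAt_inv_one (K := ℝ)).tendsto.comp hlin
  rw [inv_one] at hinv
  refine hinv.congr' ?_
  filter_upwards [eventually_ne_atTop 0] with t ht using (smul_inv_smul_one_sub M ht).symm

end Matrix

theorem Filter.Tendsto.zero_of_smul_atTop {α E : Type*} [AddCommGroup E] [TopologicalSpace E]
    [Module ℝ E] [ContinuousSMul ℝ E] {l : Filter α} {c : α → ℝ} {f : α → E} {v : E}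
    (hc : Tendsto c l atTop) (h : Tendsto (fun x => c x • f x) l (𝓝 v)) :
    Tendsto f l (𝓝 0) := by
  have hscaled := (tendsto_inv_atTop_zero.comp hc).smul h
  rw [zero_smul] at hscaled
  refine hscaled.congr' ?_
  filter_upwards [hc.eventually_ne_atTop 0] with x hx
  simp [smul_smul, hx]

theorem stmt_7_general (n : ℕ) (G : Matrix (Fin n) (Fin n) ℝ) (lam : ℝ) :
    let C := ((1 : Matrix (Fin n) (Fin n) ℝ) - lam • G)⁻¹
    let one : Fin n → ℝ := fun _ => 1
    let αstar : ℝ → (Fin n → ℝ) := fun ρ =>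
      ((1 + ρ) • (1 : Matrix (Fin n) (Fin n) ℝ) -
        (lam ^ 2) • ((G * C)ᵀ * (G * C)))⁻¹.mulVec (Cᵀ.mulVec one)
    Tendsto (fun ρ => (1 + ρ) • αstar ρ) atTop (nhds (Cᵀ.mulVec one)) ∧
      Tendsto αstar atTop (nhds 0) := by
  intro C one αstar
  have hshift : Tendsto (fun ρ : ℝ => 1 + ρ) atTop atTop :=
    tendsto_atTop_add_const_left _ 1 tendsto_id
  have hscaled : Tendsto (fun ρ => (1 + ρ) • αstar ρ) atTop (𝓝 (Cᵀ *ᵥ one)) := by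
    have hresolvent :=
      ((continuous_id.matrix_mulVec (continuous_const (y := Cᵀ *ᵥ one))).tendsto 1).comp
        ((tendsto_smul_inv_smul_one_sub_atTop ((lam ^ 2) • ((G * C)ᵀ * (G * C)))).comp hshift)
    simpa [αstar, Function.comp_def, smul_mulVec] using hresolvent
  exact ⟨hscaled, hshift.zero_of_smul_atTop hscaled⟩

/-- As `ρ → ∞`, `(1+ρ)·α*(ρ) → Cᵀ1`; in particular `α*(ρ) → 0`
and incentives become proportional to Bonacich centrality. -/
theorem stmt_7 (n : ℕ) (G : Matrix (Fin n) (Fin n) ℝ) (lam : ℝ)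
    (hinv : IsUnit ((1 : Matrix (Fin n) (Fin n) ℝ) - lam • G))
    (hlarge : ∀ᶠ ρ : ℝ in atTop,
      IsUnit ((1 + ρ) • (1 : Matrix (Fin n) (Fin n) ℝ) -
        (lam ^ 2) • ((G * ((1 : Matrix (Fin n) (Fin n) ℝ) - lam • G)⁻¹)ᵀ *
          (G * ((1 : Matrix (Fin n) (Fin n) ℝ) - lam • G)⁻¹)))) :
    let C := ((1 : Matrix (Fin n) (Fin n) ℝ) - lam • G)⁻¹
    let one : Fin n → ℝ := fun _ => 1
    let αstar : ℝ → (Fin n → ℝ) := fun ρ =>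
      ((1 + ρ) • (1 : Matrix (Fin n) (Fin n) ℝ) -
        (lam ^ 2) • ((G * C)ᵀ * (G * C)))⁻¹.mulVec (Cᵀ.mulVec one)
    Tendsto (fun ρ => (1 + ρ) • αstar ρ) atTop (nhds (Cᵀ.mulVec one)) ∧
      Tendsto αstar atTop (nhds 0) :=
  stmt_7_general n G lam
end

section
/- Let G be an n×n real matrix, λ a real number with I − λG invertible, C := (I − λG)⁻¹, ρ := rσ² ≥ 0, M := Cᵀ(I − λ(G+Gᵀ))C + ρI, and suppose M is invertible with α* := M⁻¹Cᵀ1. Then the maximized expected profit satisfies π(α*) = α*ᵀCᵀ1 − ½ α*ᵀMα* = ½·1ᵀCα* = ½·1ᵀe*; that is, at the optimal contract the firm's expected profit equals one-half of expected equilibrium output, for any network G, any peer-effect strength λ, and any risk level rσ². -/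
open Matrix

/-! The optimal incentive vector solves the first-order condition `M α* = Cᵀ1`, so the risk and
effort cost `½ α*ᵀ M α*` is exactly half of the revenue `α*ᵀ Cᵀ 1 = 1ᵀ C α*`. -/

theorem mulVec_inv_mulVec_of_isUnit {ι 𝕜 : Type*} [Fintype ι] [DecidableEq ι] [CommRing 𝕜]
    {M : Matrix ι ι 𝕜} (hM : IsUnit M) (b : ι → 𝕜) : M *ᵥ (M⁻¹ *ᵥ b) = b := by
  rw [mulVec_mulVec, mul_nonsing_inv M ((isUnit_iff_isUnit_det M).mp hM), one_mulVec]

theorem dotProduct_sub_half_quadForm_at_critical {ι 𝕜 : Type*} [Fintype ι] [DecidableEq ι]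
    [Field 𝕜] [NeZero (2 : 𝕜)] {M : Matrix ι ι 𝕜} (hM : IsUnit M) (b : ι → 𝕜) :
    M⁻¹ *ᵥ b ⬝ᵥ b - 1 / 2 * (M⁻¹ *ᵥ b ⬝ᵥ M *ᵥ (M⁻¹ *ᵥ b)) = 1 / 2 * (M⁻¹ *ᵥ b ⬝ᵥ b) := by
  rw [mulVec_inv_mulVec_of_isUnit hM]
  linear_combination sub_half (M⁻¹ *ᵥ b ⬝ᵥ b)

theorem stmt_10_general (n : ℕ) (G : Matrix (Fin n) (Fin n) ℝ) (lam ρ : ℝ)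
    (hM : IsUnit (((1 : Matrix (Fin n) (Fin n) ℝ) - lam • G)⁻¹ᵀ *
      ((1 : Matrix (Fin n) (Fin n) ℝ) - lam • (G + Gᵀ)) *
      ((1 : Matrix (Fin n) (Fin n) ℝ) - lam • G)⁻¹ +
      ρ • (1 : Matrix (Fin n) (Fin n) ℝ))) :
    let C := ((1 : Matrix (Fin n) (Fin n) ℝ) - lam • G)⁻¹
    let M := Cᵀ * ((1 : Matrix (Fin n) (Fin n) ℝ) - lam • (G + Gᵀ)) * C +
      ρ • (1 : Matrix (Fin n) (Fin n) ℝ)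
    let one : Fin n → ℝ := fun _ => 1
    let αstar := M⁻¹.mulVec (Cᵀ.mulVec one)
    αstar ⬝ᵥ Cᵀ.mulVec one - (1 / 2) * (αstar ⬝ᵥ M.mulVec αstar) =
      (1 / 2) * (one ⬝ᵥ C.mulVec αstar) := by
  intro C M one αstar
  have output_eq : one ⬝ᵥ C *ᵥ αstar = αstar ⬝ᵥ Cᵀ *ᵥ one := by
    rw [dotProduct_mulVec, mulVec_transpose, dotProduct_comm]
  rw [output_eq]
  exact dotProduct_sub_half_quadForm_at_critical hM _

/-- At the optimum `α* = M⁻¹Cᵀ1`, the firm's expected profit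
`π(α*) = α*ᵀCᵀ1 − ½α*ᵀMα*` equals one-half of expected equilibrium output
`½·1ᵀCα* = ½·1ᵀe*`, for any network, peer-effect strength, and risk level. -/
theorem stmt_10 (n : ℕ) (G : Matrix (Fin n) (Fin n) ℝ) (lam ρ : ℝ) (hρ : 0 ≤ ρ)
    (hinv : IsUnit ((1 : Matrix (Fin n) (Fin n) ℝ) - lam • G))
    (hM : IsUnit (((1 : Matrix (Fin n) (Fin n) ℝ) - lam • G)⁻¹ᵀ *
      ((1 : Matrix (Fin n) (Fin n) ℝ) - lam • (G + Gᵀ)) *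
      ((1 : Matrix (Fin n) (Fin n) ℝ) - lam • G)⁻¹ +
      ρ • (1 : Matrix (Fin n) (Fin n) ℝ))) :
    let C := ((1 : Matrix (Fin n) (Fin n) ℝ) - lam • G)⁻¹
    let M := Cᵀ * ((1 : Matrix (Fin n) (Fin n) ℝ) - lam • (G + Gᵀ)) * C +
      ρ • (1 : Matrix (Fin n) (Fin n) ℝ)
    let one : Fin n → ℝ := fun _ => 1
    let αstar := M⁻¹.mulVec (Cᵀ.mulVec one)
    αstar ⬝ᵥ Cᵀ.mulVec one - (1 / 2) * (αstar ⬝ᵥ M.mulVec αstar) =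
      (1 / 2) * (one ⬝ᵥ C.mulVec αstar) :=
  stmt_10_general n G lam ρ hM
end

section
/- Let G be a symmetric n×n real matrix with an orthonormal eigenbasis u₁,…,uₙ of ℝⁿ and corresponding eigenvalues μ₁,…,μₙ (G uₗ = μₗ uₗ). Let λ be real, ρ := rσ² ≥ 0, and suppose (1+ρ)(1 − λμₗ)² − (λμₗ)² > 0 for every ℓ. Then I − λG is invertible, M := C(I − 2λG)C + ρI is invertible (C := (I − λG)⁻¹), and the maximized expected profit satisfies ½·1ᵀe* = ½ Σ_{ℓ=1}^{n} ⟨uₗ, 1⟩² / [(1+ρ)(1 − λμₗ)² − (λμₗ)²], where e* := C M⁻¹ C 1. -/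
/-!
Every matrix in the statement is a rational function of `G`, hence diagonal in the orthonormal
eigenbasis `u`: writing `Q` for the orthogonal matrix with columns `uₗ`, the map
`f ↦ Q diag(f) Qᵀ` is an algebra homomorphism sending `μ` to `G`. Under it `C` corresponds to
`aₗ⁻¹` with `aₗ = 1 - λμₗ`, `M` to `dₗ / aₗ²` with `dₗ = (1 + ρ)aₗ² - (λμₗ)²`, and so `C M⁻¹ C`
to `dₗ⁻¹`; the quadratic form `1ᵀ Q diag(d⁻¹) Qᵀ 1` is then `Σₗ ⟨uₗ, 1⟩² / dₗ`.
-/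

open Matrix

section
variable {ι : Type*} [Fintype ι] [DecidableEq ι] (Q : unitaryGroup ι ℝ)

def conjDiagonalAlgHom : (ι → ℝ) →ₐ[ℝ] Matrix ι ι ℝ :=
  (Unitary.conjStarAlgAut ℝ _ Q).toAlgEquiv.toAlgHom.comp (diagonalAlgHom ℝ)

theorem unitaryGroup_mul_transpose : (Q : Matrix ι ι ℝ) * (Q : Matrix ι ι ℝ)ᵀ = 1 := by
  rw [← conjTranspose_eq_transpose_of_trivial, ← star_eq_conjTranspose,
    Unitary.mul_star_self_of_mem Q.2]

theorem conjDiagonalAlgHom_apply (f : ι → ℝ) :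
    conjDiagonalAlgHom Q f = Q * diagonal f * (Q : Matrix ι ι ℝ)ᵀ := by
  simp [conjDiagonalAlgHom, star_eq_conjTranspose, conjTranspose_eq_transpose_of_trivial]

theorem isUnit_conjDiagonalAlgHom {f : ι → ℝ} (hf : ∀ i, f i ≠ 0) :
    IsUnit (conjDiagonalAlgHom Q f) :=
  (Pi.isUnit_iff.mpr fun i => (hf i).isUnit).map _

theorem inv_conjDiagonalAlgHom {f : ι → ℝ} (hf : ∀ i, f i ≠ 0) :
    (conjDiagonalAlgHom Q f)⁻¹ = conjDiagonalAlgHom Q f⁻¹ := by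
  refine inv_eq_right_inv ?_
  rw [← map_mul, ← map_one (conjDiagonalAlgHom Q)]
  congr 1
  funext i
  exact mul_inv_cancel₀ (hf i)

theorem dotProduct_conjDiagonalAlgHom_mulVec (f x : ι → ℝ) :
    x ⬝ᵥ conjDiagonalAlgHom Q f *ᵥ x = ∑ i, f i * ((Q : Matrix ι ι ℝ)ᵀ *ᵥ x) i ^ 2 := by
  rw [conjDiagonalAlgHom_apply, ← mulVec_mulVec, ← mulVec_mulVec, dotProduct_mulVec,
    ← mulVec_transpose]
  simp only [dotProduct, mulVec_diagonal]
  exact Finset.sum_congr rfl fun i _ => by ring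

theorem transpose_of_mem_unitaryGroup {u : ι → ι → ℝ}
    (hu : ∀ i j, u i ⬝ᵥ u j = if i = j then 1 else 0) : (of u)ᵀ ∈ unitaryGroup ι ℝ := by
  rw [mem_unitaryGroup_iff']
  ext i j
  simpa [mul_apply, one_apply, dotProduct] using hu i j

theorem eq_conjDiagonalAlgHom_of_mul_eq {G : Matrix ι ι ℝ} {μ : ι → ℝ}
    (hGQ : G * Q = Q * diagonal μ) : G = conjDiagonalAlgHom Q μ := by
  rw [conjDiagonalAlgHom_apply, ← hGQ, Matrix.mul_assoc, unitaryGroup_mul_transpose,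
    Matrix.mul_one]

theorem mul_eq_mul_diagonal_of_mulVec_eq_smul {u : ι → ι → ℝ} {G : Matrix ι ι ℝ} {μ : ι → ℝ}
    (heig : ∀ i, G *ᵥ u i = μ i • u i) : G * (of u)ᵀ = (of u)ᵀ * diagonal μ := by
  ext i l
  rw [mul_diagonal]
  simpa [mul_apply, mulVec, dotProduct, mul_comm] using congrFun (heig l) i

end

theorem stmt_12_general (n : ℕ) (G : Matrix (Fin n) (Fin n) ℝ) (lam ρ : ℝ)
    (u : Fin n → (Fin n → ℝ)) (μ : Fin n → ℝ)
    (hortho : ∀ l l' : Fin n, u l ⬝ᵥ u l' = if l = l' then 1 else 0)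
    (heig : ∀ l : Fin n, G.mulVec (u l) = μ l • u l)
    (hpos : ∀ l : Fin n, 0 < (1 + ρ) * (1 - lam * μ l) ^ 2 - (lam * μ l) ^ 2) :
    let one : Fin n → ℝ := fun _ => 1
    let C := ((1 : Matrix (Fin n) (Fin n) ℝ) - lam • G)⁻¹
    let M := C * ((1 : Matrix (Fin n) (Fin n) ℝ) - (2 * lam) • G) * C +
      ρ • (1 : Matrix (Fin n) (Fin n) ℝ)
    let estar := C.mulVec (M⁻¹.mulVec (C.mulVec one))
    IsUnit ((1 : Matrix (Fin n) (Fin n) ℝ) - lam • G) ∧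
    IsUnit M ∧
    (1 / 2) * (one ⬝ᵥ estar) =
      (1 / 2) * ∑ l : Fin n,
        (u l ⬝ᵥ one) ^ 2 / ((1 + ρ) * (1 - lam * μ l) ^ 2 - (lam * μ l) ^ 2) := by
  intro one C M estar
  set φ := conjDiagonalAlgHom ⟨(of u)ᵀ, transpose_of_mem_unitaryGroup hortho⟩
  set a : Fin n → ℝ := fun l => 1 - lam * μ l
  set d : Fin n → ℝ := fun l => (1 + ρ) * (1 - lam * μ l) ^ 2 - (lam * μ l) ^ 2
  have ha : ∀ l, a l ≠ 0 := fun l hl => by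
    have := hpos l
    rw [show 1 - lam * μ l = 0 from hl] at this
    nlinarith
  have hG : G = φ μ :=
    eq_conjDiagonalAlgHom_of_mul_eq _ (mul_eq_mul_diagonal_of_mulVec_eq_smul heig)
  have hA : 1 - lam • G = φ a := by
    rw [hG, ← map_smul, ← map_one φ, ← map_sub]; rfl
  have hC : C = φ a⁻¹ := by rw [← inv_conjDiagonalAlgHom _ ha, ← hA]
  -- the identity `1 - 2x = (1 - x)² - x²` turns `a⁻¹ (1 - 2λμ) a⁻¹ + ρ` into `d / a²`
  have hM : M = φ (d / a ^ 2) := by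
    simp only [M, hC, hG, ← map_smul, ← map_one φ, ← map_sub, ← map_mul, ← map_add]
    congr 1
    funext l
    have := ha l
    simp only [Pi.add_apply, Pi.mul_apply, Pi.inv_apply, Pi.sub_apply, Pi.one_apply,
      Pi.smul_apply, smul_eq_mul, Pi.div_apply, Pi.pow_apply, a, d] at this ⊢
    field_simp
    ring
  have hMd : ∀ l, (d / a ^ 2) l ≠ 0 := fun l => div_ne_zero (hpos l).ne' (pow_ne_zero 2 (ha l))
  have hestar : estar = φ d⁻¹ *ᵥ one := by
    rw [show estar = (C * M⁻¹ * C) *ᵥ one by simp only [estar, mulVec_mulVec], hC, hM,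
      inv_conjDiagonalAlgHom _ hMd, ← map_mul, ← map_mul]
    congr 2
    funext l
    have := ha l
    simp only [Pi.mul_apply, Pi.inv_apply, Pi.div_apply, Pi.pow_apply]
    field_simp
  refine ⟨hA ▸ isUnit_conjDiagonalAlgHom _ ha, hM ▸ isUnit_conjDiagonalAlgHom _ hMd, ?_⟩
  rw [hestar, dotProduct_conjDiagonalAlgHom_mulVec]
  simp [div_eq_inv_mul, mulVec, d]

/-- Spectral decomposition of equilibrium profits: if `G` has an
orthonormal eigenbasis `u₁,…,uₙ` with eigenvalues `μₗ` and
`(1+ρ)(1 − λμₗ)² − (λμₗ)² > 0` for every `ℓ`, then `I − λG` and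
`M = C(I − 2λG)C + ρI` are invertible and
`½·1ᵀe* = ½ Σₗ ⟨uₗ,1⟩² / [(1+ρ)(1 − λμₗ)² − (λμₗ)²]` where `e* = CM⁻¹C1`. -/
theorem stmt_12 (n : ℕ) (G : Matrix (Fin n) (Fin n) ℝ) (lam ρ : ℝ)
    (hG : G.IsSymm) (hρ : 0 ≤ ρ)
    (u : Fin n → (Fin n → ℝ)) (μ : Fin n → ℝ)
    (hortho : ∀ l l' : Fin n, u l ⬝ᵥ u l' = if l = l' then 1 else 0)
    (heig : ∀ l : Fin n, G.mulVec (u l) = μ l • u l)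
    (hpos : ∀ l : Fin n, 0 < (1 + ρ) * (1 - lam * μ l) ^ 2 - (lam * μ l) ^ 2) :
    let one : Fin n → ℝ := fun _ => 1
    let C := ((1 : Matrix (Fin n) (Fin n) ℝ) - lam • G)⁻¹
    let M := C * ((1 : Matrix (Fin n) (Fin n) ℝ) - (2 * lam) • G) * C +
      ρ • (1 : Matrix (Fin n) (Fin n) ℝ)
    let estar := C.mulVec (M⁻¹.mulVec (C.mulVec one))
    IsUnit ((1 : Matrix (Fin n) (Fin n) ℝ) - lam • G) ∧
    IsUnit M ∧
    (1 / 2) * (one ⬝ᵥ estar) =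
      (1 / 2) * ∑ l : Fin n,
        (u l ⬝ᵥ one) ^ 2 / ((1 + ρ) * (1 - lam * μ l) ^ 2 - (lam * μ l) ^ 2) :=
  stmt_12_general n G lam ρ u μ hortho heig hpos
end

section
/- Let G be a symmetric n×n real matrix with constant row sums d (i.e., G1 = d·1), let λ be real, ρ := rσ² ≥ 0, and set D := 1 − 2λd + ρ(1 − λd)². Assume D ≠ 0 and that the matrix I − 2λG + ρ(I − λG)² is invertible. Then the unique solution of (I − 2λG + ρ(I − λG)²)e* = 1 is e* = (1/D)·1, and the firm's maximized expected profit equals ½·1ᵀe* = n/(2D). In particular, all d-regular graphs on n nodes generate the same expected profit, regardless of their component structure. -/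
open Matrix

/-! Regularity says that `1` is an eigenvector of `G` for `d`, hence of every polynomial in `G`;
for the equilibrium matrix the eigenvalue is `D`, so `(1/D)·1` solves the system, and invertibility
makes the solution unique. -/

section Eigenvector

variable {m R : Type*} [Fintype m] [DecidableEq m] [CommRing R] {v : m → R}

theorem Matrix.sq_mulVec_of_mulVec_eq_smul {M : Matrix m m R} {c : R} (h : M *ᵥ v = c • v) :
    (M ^ 2) *ᵥ v = c ^ 2 • v := by
  rw [sq, ← mulVec_mulVec, h, mulVec_smul, h, smul_smul, sq]

theorem Matrix.one_sub_smul_mulVec_of_mulVec_eq_smul {G : Matrix m m R} {d : R}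
    (h : G *ᵥ v = d • v) (a : R) : (1 - a • G) *ᵥ v = (1 - a * d) • v := by
  rw [sub_mulVec, smul_mulVec, h, one_mulVec, smul_smul, sub_smul, one_smul]

theorem Matrix.effort_mulVec_of_mulVec_eq_smul {G : Matrix m m R} {d : R}
    (h : G *ᵥ v = d • v) (lam ρ : R) :
    (1 - (2 * lam) • G + ρ • (1 - lam • G) ^ 2) *ᵥ v =
      (1 - 2 * lam * d + ρ * (1 - lam * d) ^ 2) • v := by
  rw [add_mulVec, sub_mulVec, smul_mulVec, smul_mulVec, one_mulVec, h,
    sq_mulVec_of_mulVec_eq_smul (one_sub_smul_mulVec_of_mulVec_eq_smul h lam)]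
  module

end Eigenvector

theorem stmt_13_general (n : ℕ) (G : Matrix (Fin n) (Fin n) ℝ) (lam ρ d : ℝ)
    (hreg : G.mulVec (fun _ => 1) = fun _ => d)
    (hD : 1 - 2 * lam * d + ρ * (1 - lam * d) ^ 2 ≠ 0)
    (hinv : IsUnit ((1 : Matrix (Fin n) (Fin n) ℝ) - (2 * lam) • G +
      ρ • ((1 : Matrix (Fin n) (Fin n) ℝ) - lam • G) ^ 2)) :
    let one : Fin n → ℝ := fun _ => 1
    let D : ℝ := 1 - 2 * lam * d + ρ * (1 - lam * d) ^ 2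
    let estar : Fin n → ℝ := (1 / D) • one
    (((1 : Matrix (Fin n) (Fin n) ℝ) - (2 * lam) • G +
        ρ • ((1 : Matrix (Fin n) (Fin n) ℝ) - lam • G) ^ 2).mulVec estar = one) ∧
    (∀ e : Fin n → ℝ,
      ((1 : Matrix (Fin n) (Fin n) ℝ) - (2 * lam) • G +
        ρ • ((1 : Matrix (Fin n) (Fin n) ℝ) - lam • G) ^ 2).mulVec e = one → e = estar) ∧
    (1 / 2) * (one ⬝ᵥ estar) = n / (2 * D) := by
  intro one D estar
  have hGone : G *ᵥ one = d • one := by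
    rw [hreg]
    funext i
    simp [one]
  have hsol : (1 - (2 * lam) • G + ρ • (1 - lam • G) ^ 2) *ᵥ estar = one := by
    rw [mulVec_smul, effort_mulVec_of_mulVec_eq_smul hGone, smul_smul, one_div,
      inv_mul_cancel₀ hD, one_smul]
  refine ⟨hsol, fun e he => mulVec_injective_of_isUnit hinv (he.trans hsol.symm), ?_⟩
  simp only [estar, one, dotProduct, Pi.smul_apply, smul_eq_mul, mul_one,
    Finset.sum_const, Finset.card_univ, Fintype.card_fin, nsmul_eq_mul]
  field_simp

/-- For a symmetric `G` with constant row sums `d` (a `d`-regular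
network), the unique solution of `(I − 2λG + ρ(I − λG)²)e* = 1` is
`e* = (1/D)·1` with `D = 1 − 2λd + ρ(1 − λd)²`, and the maximized expected profit
equals `½·1ᵀe* = n/(2D)`: all `d`-regular graphs yield the same profit. -/
theorem stmt_13 (n : ℕ) (G : Matrix (Fin n) (Fin n) ℝ) (lam ρ d : ℝ)
    (hG : G.IsSymm) (hρ : 0 ≤ ρ)
    (hreg : G.mulVec (fun _ => 1) = fun _ => d)
    (hD : 1 - 2 * lam * d + ρ * (1 - lam * d) ^ 2 ≠ 0)
    (hinv : IsUnit ((1 : Matrix (Fin n) (Fin n) ℝ) - (2 * lam) • G +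
      ρ • ((1 : Matrix (Fin n) (Fin n) ℝ) - lam • G) ^ 2)) :
    let one : Fin n → ℝ := fun _ => 1
    let D : ℝ := 1 - 2 * lam * d + ρ * (1 - lam * d) ^ 2
    let estar : Fin n → ℝ := (1 / D) • one
    (((1 : Matrix (Fin n) (Fin n) ℝ) - (2 * lam) • G +
        ρ • ((1 : Matrix (Fin n) (Fin n) ℝ) - lam • G) ^ 2).mulVec estar = one) ∧
    (∀ e : Fin n → ℝ,
      ((1 : Matrix (Fin n) (Fin n) ℝ) - (2 * lam) • G +
        ρ • ((1 : Matrix (Fin n) (Fin n) ℝ) - lam • G) ^ 2).mulVec e = one → e = estar) ∧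
    (1 / 2) * (one ⬝ᵥ estar) = n / (2 * D) :=
  stmt_13_general n G lam ρ d hreg hD hinv
end

section
/- Let m, n ≥ 1, N := m + n, and let G be the N×N adjacency matrix of the complete bipartite graph K_{m,n} (G_{ij} = 1 if i and j lie in different blocks, 0 otherwise). Let λ ≥ 0, ρ := rσ² ≥ 0, and assume (1+ρ)(1 − λ√(mn))² − λ²mn > 0 and (1+ρ)(1 + λ√(mn))² − λ²mn > 0. Then the firm's maximized expected profit equals ½·1ᵀe* = ½·[ (√(m/2) + √(n/2))² / ((1+ρ)(1 − λ√(mn))² − λ²mn) + (√(m/2) − √(n/2))² / ((1+ρ)(1 + λ√(mn))² − λ²mn) ]. -/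
/-! The system matrix `M = I − 2λG + ρ(I − λG)²` is a polynomial in the symmetric matrix `G`,
hence symmetric, so any `v` with `M v = 1` gives `1ᵀe* = (M v)ᵀe* = vᵀ(M e*) = vᵀ1` without
inverting `M`. Vectors constant on each side of `K_{m,n}` form an invariant subspace on which
`G` acts as `(x, y) ↦ (n y, m x)`; there `M v = 1` is a 2×2 linear system whose determinant
factors as the product of the two denominators `(1 + ρ)(1 ∓ λ√(mn))² − λ²mn`. -/

open Matrix

namespace Matrix

variable {ι R : Type*} [Fintype ι] [CommRing R]

def peerSystem [DecidableEq ι] (lam ρ : R) (G : Matrix ι ι R) : Matrix ι ι R :=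
  1 - (2 * lam) • G + ρ • (1 - lam • G) ^ 2

theorem IsSymm.mulVec_dotProduct {M : Matrix ι ι R} (hM : M.IsSymm) (v w : ι → R) :
    M *ᵥ v ⬝ᵥ w = v ⬝ᵥ M *ᵥ w := by
  rw [dotProduct_mulVec, ← vecMul_transpose, hM.eq]

theorem IsSymm.peerSystem [DecidableEq ι] {G : Matrix ι ι R} (hG : G.IsSymm) (lam ρ : R) :
    (peerSystem lam ρ G).IsSymm :=
  (isSymm_one.sub (hG.smul _)).add (((isSymm_one.sub (hG.smul lam)).pow 2).smul ρ)

end Matrix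

section CompleteBipartite

variable {R : Type*} [CommRing R] (m n : ℕ)

def blockVec (x y : R) : Fin (m + n) → R := fun i => if (i : ℕ) < m then x else y

def completeBipartiteAdj : Matrix (Fin (m + n)) (Fin (m + n)) R :=
  of fun i j => if ((i : ℕ) < m ↔ (j : ℕ) < m) then 0 else 1

variable {m n}

theorem sum_blockVec (x y : R) : ∑ i, blockVec m n x y i = m * x + n * y := by
  rw [← Equiv.sum_comp finSumFinEquiv]
  simp [blockVec, Fintype.sum_sum_type]

theorem blockVec_one : blockVec m n (1 : R) 1 = fun _ => 1 := by
  ext i; simp [blockVec]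

@[simp]
theorem blockVec_add (x y x' y' : R) :
    blockVec m n x y + blockVec m n x' y' = blockVec m n (x + x') (y + y') := by
  ext i; by_cases hi : (i : ℕ) < m <;> simp [blockVec, hi]

@[simp]
theorem blockVec_sub (x y x' y' : R) :
    blockVec m n x y - blockVec m n x' y' = blockVec m n (x - x') (y - y') := by
  ext i; by_cases hi : (i : ℕ) < m <;> simp [blockVec, hi]

@[simp]
theorem smul_blockVec (c x y : R) : c • blockVec m n x y = blockVec m n (c * x) (c * y) := by
  ext i; by_cases hi : (i : ℕ) < m <;> simp [blockVec, hi]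

theorem isSymm_completeBipartiteAdj : (completeBipartiteAdj m n : Matrix _ _ R).IsSymm :=
  IsSymm.ext fun i j => by simp only [completeBipartiteAdj, of_apply, Iff.comm]

theorem completeBipartiteAdj_mulVec_blockVec (x y : R) :
    completeBipartiteAdj m n *ᵥ blockVec m n x y = blockVec m n (n * y) (m * x) := by
  ext i
  simp only [mulVec, dotProduct, completeBipartiteAdj, of_apply]
  by_cases hi : (i : ℕ) < m
  · trans ∑ j, blockVec m n 0 y j
    · refine Finset.sum_congr rfl fun j _ => ?_
      by_cases hj : (j : ℕ) < m <;> simp [blockVec, hi, hj]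
    · rw [sum_blockVec]; simp [blockVec, hi]
  · trans ∑ j, blockVec m n x 0 j
    · refine Finset.sum_congr rfl fun j _ => ?_
      by_cases hj : (j : ℕ) < m <;> simp [blockVec, hi, hj]
    · rw [sum_blockVec]; simp [blockVec, hi]

theorem peerSystem_completeBipartiteAdj_mulVec_blockVec (lam ρ x y : R) :
    peerSystem lam ρ (completeBipartiteAdj m n) *ᵥ blockVec m n x y =
      blockVec m n ((1 + ρ * (1 + lam ^ 2 * (m * n))) * x - 2 * lam * (1 + ρ) * n * y)
        ((1 + ρ * (1 + lam ^ 2 * (m * n))) * y - 2 * lam * (1 + ρ) * m * x) := by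
  simp only [peerSystem, add_mulVec, sub_mulVec, one_mulVec, smul_mulVec, sq, ← mulVec_mulVec,
    completeBipartiteAdj_mulVec_blockVec, blockVec_add, blockVec_sub, smul_blockVec]
  congr 1 <;> ring

end CompleteBipartite

theorem exists_solution_bipartite_block_system (m n μ α β : ℝ) (hμ : μ ^ 2 = m * n)
    (h₁ : α - β * μ ≠ 0) (h₂ : α + β * μ ≠ 0) :
    ∃ a b : ℝ, α * a - β * n * b = 1 ∧ α * b - β * m * a = 1 ∧
      m * a + n * b = ((m + n) / 2 + μ) / (α - β * μ) + ((m + n) / 2 - μ) / (α + β * μ) := by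
  have hD : (α - β * μ) * (α + β * μ) ≠ 0 := mul_ne_zero h₁ h₂
  refine ⟨(α + β * n) / ((α - β * μ) * (α + β * μ)), (α + β * m) / ((α - β * μ) * (α + β * μ)),
    ?_, ?_, ?_⟩
  · field_simp; linear_combination β ^ 2 * hμ
  · field_simp; linear_combination β ^ 2 * hμ
  · field_simp; linear_combination (-4 * β) * hμ

theorem sqrt_half_mul_sqrt_half {a b : ℝ} (ha : 0 ≤ a) :
    √(a / 2) * √(b / 2) = √(a * b) / 2 := by
  rw [← Real.sqrt_mul (by positivity), show a / 2 * (b / 2) = a * b / 2 ^ 2 by ring,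
    Real.sqrt_div' _ (by positivity), Real.sqrt_sq two_pos.le]

theorem sqrt_half_add_sqrt_half_sq {a b : ℝ} (ha : 0 ≤ a) (hb : 0 ≤ b) :
    (√(a / 2) + √(b / 2)) ^ 2 = (a + b) / 2 + √(a * b) := by
  rw [add_sq, Real.sq_sqrt (by positivity), Real.sq_sqrt (by positivity), mul_assoc,
    sqrt_half_mul_sqrt_half ha]
  ring

theorem sqrt_half_sub_sqrt_half_sq {a b : ℝ} (ha : 0 ≤ a) (hb : 0 ≤ b) :
    (√(a / 2) - √(b / 2)) ^ 2 = (a + b) / 2 - √(a * b) := by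
  rw [sub_sq, Real.sq_sqrt (by positivity), Real.sq_sqrt (by positivity), mul_assoc,
    sqrt_half_mul_sqrt_half ha]
  ring

theorem stmt_14_general (m n : ℕ) (lam ρ : ℝ)
    (G : Matrix (Fin (m + n)) (Fin (m + n)) ℝ)
    (hGdef : ∀ i j : Fin (m + n),
      G i j = if (((i : ℕ) < m) ↔ ((j : ℕ) < m)) then 0 else 1)
    (hden1 : 0 < (1 + ρ) * (1 - lam * Real.sqrt (m * n)) ^ 2 - lam ^ 2 * (m * n))
    (hden2 : 0 < (1 + ρ) * (1 + lam * Real.sqrt (m * n)) ^ 2 - lam ^ 2 * (m * n))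
    (estar : Fin (m + n) → ℝ)
    (hestar : ((1 : Matrix (Fin (m + n)) (Fin (m + n)) ℝ) - (2 * lam) • G +
      ρ • ((1 : Matrix (Fin (m + n)) (Fin (m + n)) ℝ) - lam • G) ^ 2).mulVec estar =
      fun _ => 1) :
    (1 / 2) * ((fun _ : Fin (m + n) => (1 : ℝ)) ⬝ᵥ estar) =
      (1 / 2) * ((Real.sqrt (m / 2) + Real.sqrt (n / 2)) ^ 2 /
          ((1 + ρ) * (1 - lam * Real.sqrt (m * n)) ^ 2 - lam ^ 2 * (m * n)) +
        (Real.sqrt (m / 2) - Real.sqrt (n / 2)) ^ 2 /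
          ((1 + ρ) * (1 + lam * Real.sqrt (m * n)) ^ 2 - lam ^ 2 * (m * n))) := by
  obtain rfl : G = completeBipartiteAdj m n := Matrix.ext hGdef
  set μ := √((m : ℝ) * n)
  have hμ : μ ^ 2 = m * n := Real.sq_sqrt (by positivity)
  set α := 1 + ρ * (1 + lam ^ 2 * (m * n))
  set β := 2 * lam * (1 + ρ)
  have hden₁ : (1 + ρ) * (1 - lam * μ) ^ 2 - lam ^ 2 * (m * n) = α - β * μ := by
    linear_combination (1 + ρ) * lam ^ 2 * hμ
  have hden₂ : (1 + ρ) * (1 + lam * μ) ^ 2 - lam ^ 2 * (m * n) = α + β * μ := by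
    linear_combination (1 + ρ) * lam ^ 2 * hμ
  obtain ⟨a, b, ha, hb, hsum⟩ := exists_solution_bipartite_block_system m n μ α β hμ
    (hden₁ ▸ hden1.ne') (hden₂ ▸ hden2.ne')
  change peerSystem lam ρ (completeBipartiteAdj m n) *ᵥ estar = _ at hestar
  have hv : peerSystem lam ρ (completeBipartiteAdj m n) *ᵥ blockVec m n a b = fun _ => 1 := by
    rw [peerSystem_completeBipartiteAdj_mulVec_blockVec, ha, hb, blockVec_one]
  have hdot : (fun _ => 1) ⬝ᵥ estar = m * a + n * b := by
    rw [← hv, (isSymm_completeBipartiteAdj.peerSystem lam ρ).mulVec_dotProduct, hestar,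
      ← Pi.one_def, dotProduct_one, sum_blockVec]
  rw [hdot, hden₁, hden₂, sqrt_half_add_sqrt_half_sq, sqrt_half_sub_sqrt_half_sq,
    hsum] <;> positivity

/-- For the complete bipartite peer network `K_{m,n}` (blocks of
sizes `m` and `n`, `N = m + n`), the maximized expected profit `½·1ᵀe*`, where
`e*` solves `(I − 2λG + ρ(I − λG)²)e* = 1`, equals the stated two-term spectral
formula involving the eigenvalues `±√(mn)`. -/
theorem stmt_14 (m n : ℕ) (hm : 1 ≤ m) (hn : 1 ≤ n) (lam ρ : ℝ)
    (hlam : 0 ≤ lam) (hρ : 0 ≤ ρ)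
    (G : Matrix (Fin (m + n)) (Fin (m + n)) ℝ)
    (hGdef : ∀ i j : Fin (m + n),
      G i j = if (((i : ℕ) < m) ↔ ((j : ℕ) < m)) then 0 else 1)
    (hden1 : 0 < (1 + ρ) * (1 - lam * Real.sqrt (m * n)) ^ 2 - lam ^ 2 * (m * n))
    (hden2 : 0 < (1 + ρ) * (1 + lam * Real.sqrt (m * n)) ^ 2 - lam ^ 2 * (m * n))
    (estar : Fin (m + n) → ℝ)
    (hestar : ((1 : Matrix (Fin (m + n)) (Fin (m + n)) ℝ) - (2 * lam) • G +
      ρ • ((1 : Matrix (Fin (m + n)) (Fin (m + n)) ℝ) - lam • G) ^ 2).mulVec estar =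
      fun _ => 1) :
    (1 / 2) * ((fun _ : Fin (m + n) => (1 : ℝ)) ⬝ᵥ estar) =
      (1 / 2) * ((Real.sqrt (m / 2) + Real.sqrt (n / 2)) ^ 2 /
          ((1 + ρ) * (1 - lam * Real.sqrt (m * n)) ^ 2 - lam ^ 2 * (m * n)) +
        (Real.sqrt (m / 2) - Real.sqrt (n / 2)) ^ 2 /
          ((1 + ρ) * (1 + lam * Real.sqrt (m * n)) ^ 2 - lam ^ 2 * (m * n))) :=
  stmt_14_general m n lam ρ G hGdef hden1 hden2 estar hestar
end

section
/- Let G be an n×n real matrix, λ real with I − λG invertible, C := (I − λG)⁻¹, ρ := rσ² ≥ 0, M := Cᵀ(I − λ(G+Gᵀ))C + ρI, T an n×k {0,1}-matrix with exactly one 1 per row, and assume TᵀMT is invertible. Set α̂* := (TᵀMT)⁻¹TᵀCᵀ1, α := Tα̂*, e* := Cα, ψᵢ := ½(e*ᵢ)² − λ e*ᵢ Σⱼ gᵢⱼ e*ⱼ, and for each worker i let μᵢ := max{ψⱼ : worker j has the same type as i} − ψᵢ ≥ 0. Then the firm's expected profit 1ᵀe* − ½ρ αᵀα − Σᵢψᵢ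 − Σᵢμᵢ equals ½·1ᵀe* − Σᵢμᵢ; that is, with coarse contracts the maximized expected profit equals one-half of equilibrium output minus the sum of the workers' centrality rents. -/
open Matrix BigOperators Finset

/-!
The optimal coarse incentives solve the normal equations `(TᵀMT) α̂ = TᵀCᵀ1`, so `α = Tα̂`
satisfies `αᵀMα = 1ᵀCα = 1ᵀe*`. Expanding `M` gives `αᵀMα = 2 Σᵢ ψᵢ + ρ αᵀα`, hence output minus
incentive risk and effort costs is `1ᵀe* − ½ αᵀMα = ½ 1ᵀe*`.
-/

namespace Matrix

variable {m k R : Type*} [Fintype m] [Fintype k] [CommSemiring R]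

theorem dotProduct_mulVec_eq_of_normal_eq (M : Matrix m m R)
    (T : Matrix m k R) (b : m → R) {x : k → R} (hx : (Tᵀ * M * T) *ᵥ x = Tᵀ *ᵥ b) :
    T *ᵥ x ⬝ᵥ M *ᵥ (T *ᵥ x) = b ⬝ᵥ T *ᵥ x := by
  have h := congrArg (x ⬝ᵥ ·) hx
  simp only [← mulVec_mulVec, dotProduct_transpose_mulVec] at h
  rwa [dotProduct_comm] at h

theorem dotProduct_mulVec_transpose_mul_mul (C A : Matrix m m R) (x : m → R) :
    x ⬝ᵥ (Cᵀ * A * C) *ᵥ x = C *ᵥ x ⬝ᵥ A *ᵥ (C *ᵥ x) := by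
  rw [Matrix.mul_assoc, ← mulVec_mulVec, ← mulVec_mulVec, dotProduct_transpose_mulVec,
    dotProduct_comm]

theorem dotProduct_add_transpose_mulVec (G : Matrix m m R) (x : m → R) :
    x ⬝ᵥ (G + Gᵀ) *ᵥ x = 2 * (x ⬝ᵥ G *ᵥ x) := by
  rw [add_mulVec, dotProduct_add, dotProduct_transpose_mulVec, two_mul]

end Matrix

theorem le_ciSup_fiber {ι κ α : Type*} [Finite ι] [ConditionallyCompleteLattice α]
    (f : ι → α) (p : ι → κ) (i : ι) : f i ≤ ⨆ j : {j // p j = p i}, f j :=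
  le_ciSup (f := fun j : {j // p j = p i} => f j) (Finite.bddAbove_range _) ⟨i, rfl⟩

theorem stmt_18_general (n k : ℕ) (G : Matrix (Fin n) (Fin n) ℝ) (lam ρ : ℝ)
    (type : Fin n → Fin k)
    (T : Matrix (Fin n) (Fin k) ℝ)
    (hTMT : IsUnit (Tᵀ * (((1 : Matrix (Fin n) (Fin n) ℝ) - lam • G)⁻¹ᵀ *
      ((1 : Matrix (Fin n) (Fin n) ℝ) - lam • (G + Gᵀ)) *
      ((1 : Matrix (Fin n) (Fin n) ℝ) - lam • G)⁻¹ +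
      ρ • (1 : Matrix (Fin n) (Fin n) ℝ)) * T)) :
    let C := ((1 : Matrix (Fin n) (Fin n) ℝ) - lam • G)⁻¹
    let M := Cᵀ * ((1 : Matrix (Fin n) (Fin n) ℝ) - lam • (G + Gᵀ)) * C +
      ρ • (1 : Matrix (Fin n) (Fin n) ℝ)
    let one : Fin n → ℝ := fun _ => 1
    let αhatstar := (Tᵀ * M * T)⁻¹.mulVec (Tᵀ.mulVec (Cᵀ.mulVec one))
    let α := T.mulVec αhatstar
    let estar := C.mulVec α
    let ψ : Fin n → ℝ := fun i =>
      (1 / 2) * (estar i) ^ 2 - lam * estar i * ∑ j, G i j * estar j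
    let μ : Fin n → ℝ := fun i =>
      (⨆ j : {j : Fin n // type j = type i}, ψ (j : Fin n)) - ψ i
    (∀ i, 0 ≤ μ i) ∧
    one ⬝ᵥ estar - (1 / 2) * ρ * (α ⬝ᵥ α) - (∑ i, ψ i) - (∑ i, μ i) =
      (1 / 2) * (one ⬝ᵥ estar) - ∑ i, μ i := by
  intro C M one αhatstar α estar ψ μ
  refine ⟨fun i => sub_nonneg.mpr (le_ciSup_fiber ψ type i), ?_⟩
  have hnormal : (Tᵀ * M * T) *ᵥ αhatstar = Tᵀ *ᵥ (Cᵀ *ᵥ one) := by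
    rw [mulVec_mulVec, mul_nonsing_inv _ ((isUnit_iff_isUnit_det _).mp hTMT), one_mulVec]
  have houtput : α ⬝ᵥ M *ᵥ α = one ⬝ᵥ estar := by
    rw [dotProduct_mulVec_eq_of_normal_eq M T _ hnormal, dotProduct_comm,
      dotProduct_transpose_mulVec]
  have hquadratic : α ⬝ᵥ M *ᵥ α =
      estar ⬝ᵥ estar - 2 * lam * (estar ⬝ᵥ G *ᵥ estar) + ρ * (α ⬝ᵥ α) := by
    rw [add_mulVec, dotProduct_add, dotProduct_mulVec_transpose_mul_mul, sub_mulVec,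
      dotProduct_sub, smul_mulVec, dotProduct_smul, dotProduct_add_transpose_mulVec,
      smul_mulVec, dotProduct_smul, one_mulVec, one_mulVec, smul_eq_mul, smul_eq_mul]
    ring
  have hcost : ∑ i, ψ i = (1 / 2) * (estar ⬝ᵥ estar) - lam * (estar ⬝ᵥ G *ᵥ estar) := by
    simp only [ψ, dotProduct, mulVec, sum_sub_distrib, mul_sum, sq, mul_assoc]
  linarith

/-- With coarse (type-based) contracts given by the assignment
matrix `T` (worker `i` has type `type i`), at the optimal coarse incentives
`α̂* = (TᵀMT)⁻¹TᵀCᵀ1` the workers' centrality rents `μᵢ = maxⱼ {ψⱼ : same type} − ψᵢ`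
are nonnegative, and the firm's expected profit
`1ᵀe* − ½ραᵀα − Σᵢψᵢ − Σᵢμᵢ` equals `½·1ᵀe* − Σᵢμᵢ`. -/
theorem stmt_18 (n k : ℕ) (G : Matrix (Fin n) (Fin n) ℝ) (lam ρ : ℝ) (hρ : 0 ≤ ρ)
    (hinv : IsUnit ((1 : Matrix (Fin n) (Fin n) ℝ) - lam • G))
    (type : Fin n → Fin k)
    (T : Matrix (Fin n) (Fin k) ℝ)
    (hT : ∀ i j, T i j = if type i = j then 1 else 0)
    (hTMT : IsUnit (Tᵀ * (((1 : Matrix (Fin n) (Fin n) ℝ) - lam • G)⁻¹ᵀ *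
      ((1 : Matrix (Fin n) (Fin n) ℝ) - lam • (G + Gᵀ)) *
      ((1 : Matrix (Fin n) (Fin n) ℝ) - lam • G)⁻¹ +
      ρ • (1 : Matrix (Fin n) (Fin n) ℝ)) * T)) :
    let C := ((1 : Matrix (Fin n) (Fin n) ℝ) - lam • G)⁻¹
    let M := Cᵀ * ((1 : Matrix (Fin n) (Fin n) ℝ) - lam • (G + Gᵀ)) * C +
      ρ • (1 : Matrix (Fin n) (Fin n) ℝ)
    let one : Fin n → ℝ := fun _ => 1
    let αhatstar := (Tᵀ * M * T)⁻¹.mulVec (Tᵀ.mulVec (Cᵀ.mulVec one))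
    let α := T.mulVec αhatstar
    let estar := C.mulVec α
    let ψ : Fin n → ℝ := fun i =>
      (1 / 2) * (estar i) ^ 2 - lam * estar i * ∑ j, G i j * estar j
    let μ : Fin n → ℝ := fun i =>
      (⨆ j : {j : Fin n // type j = type i}, ψ (j : Fin n)) - ψ i
    (∀ i, 0 ≤ μ i) ∧
    one ⬝ᵥ estar - (1 / 2) * ρ * (α ⬝ᵥ α) - (∑ i, ψ i) - (∑ i, μ i) =
      (1 / 2) * (one ⬝ᵥ estar) - ∑ i, μ i :=
  stmt_18_general n k G lam ρ type T hTMT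
end
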